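/- arXiv:2001.02659 — 2 statements merged into one kernel-verified Lean document; each statement's English description precedes it below -/
import Mathlib

section
/- (Accumulation for gpaco) For the generalized parameterized greatest fixed point Ĝ_f(r,g) := r ⊔ G_f(r ⊔ g), we have x ⊑ Ĝ_f(r, g ⊔ x) if and only if x ⊑ Ĝ_f(r, g). -/
/-!
Monotonicity of `pG` in its parameter gives `←`. For `→`, put `s := r ⊔ g`: the hypothesis
says `x ≤ s ⊔ pG f (s ⊔ x)`, so unfolding `pG f (s ⊔ x)` once absorbs `x` into the accumulated
part, and coinduction yields `pG f (s ⊔ x) = pG f s`.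
-/

def pG {C : Type*} [CompleteLattice C] (f : C →o C) (r : C) : C :=
  OrderHom.gfp ⟨fun y => f (r ⊔ y), fun _ _ h => f.mono (sup_le_sup_left h r)⟩

def gpG {C : Type*} [CompleteLattice C] (f : C →o C) (r g : C) : C :=
  r ⊔ pG f (r ⊔ g)

section

variable {C : Type*} [CompleteLattice C] (f : C →o C)

theorem le_pG {r y : C} (h : y ≤ f (r ⊔ y)) : y ≤ pG f r :=
  OrderHom.le_gfp _ h

theorem pG_unfold (r : C) : f (r ⊔ pG f r) = pG f r :=
  OrderHom.map_gfp ⟨fun y => f (r ⊔ y), fun _ _ h => f.mono (sup_le_sup_left h r)⟩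

theorem pG_mono : Monotone (pG f) := fun r _ hrs =>
  le_pG f <| (pG_unfold f r).ge.trans (f.mono (sup_le_sup_right hrs _))

theorem pG_sup_eq_of_le {s x : C} (hx : x ≤ s ⊔ pG f (s ⊔ x)) : pG f (s ⊔ x) = pG f s := by
  refine le_antisymm (le_pG f (le_of_eq ?_)) (pG_mono f le_sup_left)
  have absorb : s ⊔ x ⊔ pG f (s ⊔ x) = s ⊔ pG f (s ⊔ x) := by
    rw [sup_right_comm, sup_eq_left.mpr hx]
  calc pG f (s ⊔ x) = f (s ⊔ x ⊔ pG f (s ⊔ x)) := (pG_unfold f _).symm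
    _ = f (s ⊔ pG f (s ⊔ x)) := by rw [absorb]

end

theorem gpG_acc {C : Type*} [CompleteLattice C] (f : C →o C) (r g x : C) :
    x ≤ gpG f r (g ⊔ x) ↔ x ≤ gpG f r g := by
  unfold gpG
  rw [← sup_assoc]
  constructor
  · intro hx
    have hx' : x ≤ r ⊔ g ⊔ pG f (r ⊔ g ⊔ x) := hx.trans (sup_le_sup_right le_sup_left _)
    rwa [pG_sup_eq_of_le f hx'] at hx
  · intro hx
    exact hx.trans (sup_le_sup_left (pG_mono f le_sup_left) r)
end

section
/- The companion cpn_f is idempotent: cpn_f ∘ cpn_f = cpn_f, and it contains the identity: x ⊑ cpn_f(x) for all x. -/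
/-!
The companion is the pointwise supremum of all monotone functions compatible with `f`, so it
dominates each of them. The identity is compatible, giving `x ≤ cpn f x`; compatible functions are
closed under composition and `cpn f` is itself compatible, so `cpn f ∘ cpn f` is dominated by
`cpn f`, and extensivity gives the reverse inequality.
-/

def cpn {C : Type*} [CompleteLattice C] (f : C →o C) (x : C) : C :=
  sSup { y | ∃ g : C →o C, (∀ z, g (f z) ≤ f (g z)) ∧ y = g x }

section Compatible

variable {α : Type*} [Preorder α]

def OrderHom.Compatible (f g : α →o α) : Prop :=
  ∀ z, g (f z) ≤ f (g z)

namespace OrderHom.Compatible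

variable {f g h : α →o α}

theorem id_right (f : α →o α) : f.Compatible OrderHom.id :=
  fun z => le_refl (f z)

theorem comp (hg : f.Compatible g) (hh : f.Compatible h) : f.Compatible (g.comp h) :=
  fun z => (g.mono (hh z)).trans (hg (h z))

end OrderHom.Compatible

end Compatible

section Companion

variable {C : Type*} [CompleteLattice C] (f : C →o C)

theorem le_cpn_of_compatible {g : C →o C} (hg : f.Compatible g) (x : C) : g x ≤ cpn f x :=
  le_sSup ⟨g, hg, rfl⟩

theorem cpn_le_iff {x y : C} : cpn f x ≤ y ↔ ∀ g : C →o C, f.Compatible g → g x ≤ y := by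
  refine ⟨fun h g hg => (le_cpn_of_compatible f hg x).trans h, fun h => sSup_le ?_⟩
  rintro _ ⟨g, hg, rfl⟩
  exact h g hg

theorem monotone_cpn : Monotone (cpn f) := fun _ y hxy =>
  (cpn_le_iff f).2 fun _ hg => (OrderHom.monotone _ hxy).trans (le_cpn_of_compatible f hg y)

def cpnHom : C →o C :=
  ⟨cpn f, monotone_cpn f⟩

theorem compatible_cpnHom : f.Compatible (cpnHom f) := fun z =>
  (cpn_le_iff f).2 fun _ hg => (hg z).trans (f.mono (le_cpn_of_compatible f hg z))

theorem le_cpn (x : C) : x ≤ cpn f x :=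
  le_cpn_of_compatible f (OrderHom.Compatible.id_right f) x

theorem cpn_cpn_le (x : C) : cpn f (cpn f x) ≤ cpn f x :=
  le_cpn_of_compatible f ((compatible_cpnHom f).comp (compatible_cpnHom f)) x

end Companion

theorem cpn_idem_and_id {C : Type*} [CompleteLattice C] (f : C →o C) :
    (∀ x, cpn f (cpn f x) = cpn f x) ∧ (∀ x, x ≤ cpn f x) :=
  ⟨fun x => (cpn_cpn_le f x).antisymm (le_cpn f _), le_cpn f⟩
end
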